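/- Let A be a (1,1)-tensor field, μ, ν eigenvalue functions of A, and X_α, Y_β generalized eigenvector fields belonging to Jordan chains, i.e., AX_α = μX_α + X_{α−1} and AY_β = νY_β + Y_{β−1} (with X₀ = Y₀ = 0). Then for every integer m ≥ 2, τ⁽ᵐ⁾_A(X_α, Y_β) = Σ_{i,j=0}^{m} (−1)^{i+j} C(m,i) C(m,j) (A − μI)^{m−i} (A − νI)^{m−j} [X_{α−i}, Y_{β−j}]. -/
import Mathlib


open scoped BigOperators

section Setup

variable (R L : Type*) [CommRing R] [Algebra ℝ R] [LieRing L] [Module ℝ L]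
  [LieAlgebra ℝ L] [Module R L] [IsScalarTower ℝ R L] [SMulCommClass R ℝ L]

/-- An abstract model of the calculus of vector fields on a smooth manifold `M`:
`R` plays the role of the smooth functions `C^∞(M)`, `L` the role of the Lie algebra
of vector fields (an `R`-module), `anchor X` is the derivation `f ↦ X(f)` (the Lie
derivative of a function along a vector field), and `leibniz` is the Leibniz rule
for the Lie bracket of vector fields. -/
structure VectorFieldCalculus : Type _ where
  anchor : L → Derivation ℝ R R
  leibniz : ∀ (f : R) (X Y : L), ⁅X, f • Y⁆ = f • ⁅X, Y⁆ + (anchor X f) • Y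

end Setup

variable {R L : Type*} [CommRing R] [Algebra ℝ R] [LieRing L] [Module ℝ L]
  [LieAlgebra ℝ L] [Module R L] [IsScalarTower ℝ R L] [SMulCommClass R ℝ L]

/-- The Nijenhuis torsion of a (1,1)-tensor field `A`. -/
def nijenhuisTorsion (A : L →ₗ[R] L) (X Y : L) : L :=
  A (A ⁅X, Y⁆) + ⁅A X, A Y⁆ - A (⁅X, A Y⁆ + ⁅A X, Y⁆)

/-- The Frölicher–Nijenhuis bracket of two (1,1)-tensor fields `A`, `B`. -/
def fnBracket (A B : L →ₗ[R] L) (X Y : L) : L :=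
  (A (B ⁅X, Y⁆) + B (A ⁅X, Y⁆)) + ⁅A X, B Y⁆ + ⁅B X, A Y⁆
    - A (⁅X, B Y⁆ + ⁅B X, Y⁆) - B (⁅X, A Y⁆ + ⁅A X, Y⁆)

/-- The Haantjes torsion of a (1,1)-tensor field `A`. -/
def haantjesTorsion (A : L →ₗ[R] L) (X Y : L) : L :=
  A (A (nijenhuisTorsion A X Y)) + nijenhuisTorsion A (A X) (A Y)
    - A (nijenhuisTorsion A X (A Y) + nijenhuisTorsion A (A X) Y)

/-- The generalized Haantjes binary tensor of two (1,1)-tensor fields `A`, `B`. -/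
def haantjesBinary (A B : L →ₗ[R] L) (X Y : L) : L :=
  (A (B (fnBracket A B X Y)) + B (A (fnBracket A B X Y)))
    + fnBracket A B (A X) (B Y) + fnBracket A B (B X) (A Y)
    - A (fnBracket A B X (B Y) + fnBracket A B (B X) Y)
    - B (fnBracket A B X (A Y) + fnBracket A B (A X) Y)

/-- The generalized Nijenhuis torsion of level `m` of a (1,1)-tensor field `A`,
with `tau A 0 X Y = ⁅X, Y⁆`. -/
def tau (A : L →ₗ[R] L) : ℕ → L → L → L
  | 0 => fun X Y => ⁅X, Y⁆
  | (m + 1) => fun X Y =>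
      A (A (tau A m X Y)) + tau A m (A X) (A Y)
        - A (tau A m X (A Y) + tau A m (A X) Y)


set_option linter.unusedSectionVars false
set_option maxRecDepth 8000

section AuxLemmas

lemma brkR (C : VectorFieldCalculus R L) (f : R) (X Y : L) :
    ⁅X, f • Y⁆ = f • ⁅X, Y⁆ + (C.anchor X f) • Y := C.leibniz f X Y

lemma brkL (C : VectorFieldCalculus R L) (f : R) (X Y : L) :
    ⁅f • X, Y⁆ = f • ⁅X, Y⁆ - (C.anchor Y f) • X := by
  rw [← lie_skew (f • X) Y, C.leibniz f Y X, ← lie_skew Y X]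
  module

lemma tau_succ (A : L →ₗ[R] L) (m : ℕ) (X Y : L) :
    tau A (m + 1) X Y = A (A (tau A m X Y)) + tau A m (A X) (A Y)
        - A (tau A m X (A Y) + tau A m (A X) Y) := rfl

lemma tau_add_left (A : L →ₗ[R] L) (m : ℕ) (X₁ X₂ Y : L) :
    tau A m (X₁ + X₂) Y = tau A m X₁ Y + tau A m X₂ Y := by
  induction m generalizing X₁ X₂ Y with
  | zero => exact add_lie X₁ X₂ Y
  | succ m ih => simp only [tau_succ, map_add, ih]; abel

lemma tau_add_right (A : L →ₗ[R] L) (m : ℕ) (X Y₁ Y₂ : L) :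
    tau A m X (Y₁ + Y₂) = tau A m X Y₁ + tau A m X Y₂ := by
  induction m generalizing X Y₁ Y₂ with
  | zero => exact lie_add X Y₁ Y₂
  | succ m ih => simp only [tau_succ, map_add, ih]; abel

lemma tau_skew (A : L →ₗ[R] L) (m : ℕ) (X Y : L) :
    tau A m Y X = - tau A m X Y := by
  induction m generalizing X Y with
  | zero => exact (lie_skew Y X).symm ▸ rfl
  | succ m ih =>
    rw [tau_succ A m Y X, tau_succ A m X Y, ih X Y, ih (A X) (A Y), ih (A X) Y, ih X (A Y)]
    simp only [map_neg, map_add]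
    abel

lemma tau_smul_left (C : VectorFieldCalculus R L) (A : L →ₗ[R] L) (m : ℕ) (hm : 1 ≤ m)
    (f : R) (X Y : L) : tau A m (f • X) Y = f • tau A m X Y := by
  induction m generalizing X Y with
  | zero => omega
  | succ m ih =>
    rcases Nat.eq_zero_or_pos m with rfl | hm'
    · show A (A ⁅f • X, Y⁆) + ⁅A (f • X), A Y⁆ - A (⁅f • X, A Y⁆ + ⁅A (f • X), Y⁆)
        = f • (A (A ⁅X, Y⁆) + ⁅A X, A Y⁆ - A (⁅X, A Y⁆ + ⁅A X, Y⁆))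
      rw [map_smul]
      simp only [brkL C]
      simp only [map_add, map_sub, map_smul, smul_add, smul_sub]
      module
    · simp only [tau_succ, map_smul, ih hm', smul_add, smul_sub, map_add, map_sub, map_smul]

lemma tau_smul_right (C : VectorFieldCalculus R L) (A : L →ₗ[R] L) (m : ℕ) (hm : 1 ≤ m)
    (f : R) (X Y : L) : tau A m X (f • Y) = f • tau A m X Y := by
  rw [tau_skew A m (f • Y) X, tau_smul_left C A m hm, tau_skew A m X Y, smul_neg, neg_neg]

lemma alt_sum_succ {M : Type*} [AddCommGroup M] (m : ℕ) (w : ℕ → M) :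
    ∑ i ∈ Finset.range (m + 2), (((-1 : ℤ) ^ i) * ((m + 1).choose i : ℤ)) • w i
      = ∑ i ∈ Finset.range (m + 1), (((-1 : ℤ) ^ i) * (m.choose i : ℤ)) • (w i - w (i + 1)) := by
  have h0 : ∑ i ∈ Finset.range (m + 2), (((-1 : ℤ) ^ i) * (m.choose i : ℤ)) • w i
      = ∑ i ∈ Finset.range (m + 1), (((-1 : ℤ) ^ i) * (m.choose i : ℤ)) • w i := by
    rw [Finset.sum_range_succ, Nat.choose_succ_self]
    simp
  rw [Finset.sum_range_succ' _ (m + 1)]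
  simp only [Nat.choose_succ_succ, Nat.cast_add, mul_add, add_smul, Finset.sum_add_distrib]
  have h1 : ∑ i ∈ Finset.range (m + 1), (((-1 : ℤ) ^ (i + 1)) * (m.choose (i + 1) : ℤ)) • w (i + 1)
        + ((-1 : ℤ) ^ 0 * ((m + 1).choose 0 : ℤ)) • w 0
      = ∑ i ∈ Finset.range (m + 1), (((-1 : ℤ) ^ i) * (m.choose i : ℤ)) • w i := by
    rw [← h0, Finset.sum_range_succ' _ (m + 1)]
    norm_num
  rw [add_assoc, h1]
  simp only [smul_sub, Finset.sum_sub_distrib]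
  have h2 : ∑ i ∈ Finset.range (m + 1), (((-1 : ℤ) ^ (i + 1)) * (m.choose i : ℤ)) • w (i + 1)
      = - ∑ i ∈ Finset.range (m + 1), (((-1 : ℤ) ^ i) * (m.choose i : ℤ)) • w (i + 1) := by
    rw [← Finset.sum_neg_distrib]
    refine Finset.sum_congr rfl fun i _ => ?_
    have : ((-1 : ℤ) ^ (i + 1)) * (m.choose i : ℤ) = -(((-1 : ℤ) ^ i) * (m.choose i : ℤ)) := by
      ring
    rw [this, neg_smul]
  rw [h2]
  abel

lemma pow_apply_succ (P : L →ₗ[R] L) (k : ℕ) (v : L) : P ((P ^ k) v) = (P ^ (k + 1)) v := by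
  rw [pow_succ', Module.End.mul_apply]

lemma comm_pow_apply (P Q : L →ₗ[R] L) (h : ∀ v, P (Q v) = Q (P v)) (k : ℕ) (v : L) :
    Q ((P ^ k) v) = (P ^ k) (Q v) := by
  induction k generalizing v with
  | zero => simp
  | succ k ih =>
      rw [pow_succ]
      simp only [Module.End.mul_apply]
      rw [ih (P v), h v]

/-- The target double sum, as a function of the level and the chain indices. -/
def Tsum (P Q : L →ₗ[R] L) (X Y : ℕ → L) (m a b : ℕ) : L :=
  ∑ i ∈ Finset.range (m + 1), ∑ j ∈ Finset.range (m + 1),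
    (((-1 : ℤ) ^ (i + j)) * (m.choose i : ℤ) * (m.choose j : ℤ)) •
      (P ^ (m - i)) ((Q ^ (m - j)) ⁅X (a - i), Y (b - j)⁆)

lemma Tstep (P Q : L →ₗ[R] L) (hc : ∀ v, P (Q v) = Q (P v)) (X Y : ℕ → L) (n a b : ℕ) :
    P (Q (Tsum P Q X Y n a b)) - P (Tsum P Q X Y n a (b - 1))
      - Q (Tsum P Q X Y n (a - 1) b) + Tsum P Q X Y n (a - 1) (b - 1)
    = Tsum P Q X Y (n + 1) a b := by
  set v : ℕ → ℕ → L := fun i j => (P ^ (n + 1 - i)) ((Q ^ (n + 1 - j)) ⁅X (a - i), Y (b - j)⁆)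
    with hv
  have hR : Tsum P Q X Y (n + 1) a b
      = ∑ i ∈ Finset.range (n + 1), ∑ j ∈ Finset.range (n + 1),
          (((-1 : ℤ) ^ (i + j)) * (n.choose i : ℤ) * (n.choose j : ℤ)) •
            ((v i j - v (i + 1) j) - (v i (j + 1) - v (i + 1) (j + 1))) := by
    have e1 : Tsum P Q X Y (n + 1) a b
        = ∑ i ∈ Finset.range (n + 2), (((-1 : ℤ) ^ i) * ((n + 1).choose i : ℤ)) •
            (∑ j ∈ Finset.range (n + 2), (((-1 : ℤ) ^ j) * ((n + 1).choose j : ℤ)) • v i j) := by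
      simp only [Tsum]
      refine Finset.sum_congr rfl fun i _ => ?_
      rw [Finset.smul_sum]
      refine Finset.sum_congr rfl fun j _ => ?_
      rw [smul_smul]
      congr 1
      ring
    rw [e1, alt_sum_succ n]
    refine Finset.sum_congr rfl fun i _ => ?_
    rw [← Finset.sum_sub_distrib]
    have e2 : ∑ j ∈ Finset.range (n + 2), ((((-1 : ℤ) ^ j) * ((n + 1).choose j : ℤ)) • v i j
          - (((-1 : ℤ) ^ j) * ((n + 1).choose j : ℤ)) • v (i + 1) j)
        = ∑ j ∈ Finset.range (n + 1), (((-1 : ℤ) ^ j) * (n.choose j : ℤ)) •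
            ((v i j - v (i + 1) j) - (v i (j + 1) - v (i + 1) (j + 1))) := by
      have h := alt_sum_succ n (fun j => v i j - v (i + 1) j)
      simp only [smul_sub] at h ⊢
      exact h
    rw [e2, Finset.smul_sum]
    refine Finset.sum_congr rfl fun j _ => ?_
    simp only [smul_sub, smul_smul]
    have hco : ((-1 : ℤ) ^ i * (n.choose i : ℤ)) * ((-1 : ℤ) ^ j * (n.choose j : ℤ))
        = ((-1 : ℤ) ^ (i + j)) * (n.choose i : ℤ) * (n.choose j : ℤ) := by ring
    rw [hco]
  have p1 : P (Q (Tsum P Q X Y n a b))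
      = ∑ i ∈ Finset.range (n + 1), ∑ j ∈ Finset.range (n + 1),
          (((-1 : ℤ) ^ (i + j)) * (n.choose i : ℤ) * (n.choose j : ℤ)) • v i j := by
    simp only [Tsum, map_sum]
    refine Finset.sum_congr rfl fun i hi => Finset.sum_congr rfl fun j hj => ?_
    rw [map_zsmul Q, map_zsmul P]
    congr 1
    rw [comm_pow_apply P Q hc, pow_apply_succ Q, pow_apply_succ P]
    have ei : n - i + 1 = n + 1 - i := by
      have := Finset.mem_range.mp hi; omega
    have ej : n - j + 1 = n + 1 - j := by
      have := Finset.mem_range.mp hj; omega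
    rw [ei, ej]
  have p2 : P (Tsum P Q X Y n a (b - 1))
      = ∑ i ∈ Finset.range (n + 1), ∑ j ∈ Finset.range (n + 1),
          (((-1 : ℤ) ^ (i + j)) * (n.choose i : ℤ) * (n.choose j : ℤ)) • v i (j + 1) := by
    simp only [Tsum, map_sum]
    refine Finset.sum_congr rfl fun i hi => Finset.sum_congr rfl fun j hj => ?_
    rw [map_zsmul P]
    congr 1
    rw [pow_apply_succ P]
    have ei : n - i + 1 = n + 1 - i := by
      have := Finset.mem_range.mp hi; omega
    have ej : n - j = n + 1 - (j + 1) := by omega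
    have eb : b - 1 - j = b - (j + 1) := by omega
    rw [ei, ej, eb]
  have p3 : Q (Tsum P Q X Y n (a - 1) b)
      = ∑ i ∈ Finset.range (n + 1), ∑ j ∈ Finset.range (n + 1),
          (((-1 : ℤ) ^ (i + j)) * (n.choose i : ℤ) * (n.choose j : ℤ)) • v (i + 1) j := by
    simp only [Tsum, map_sum]
    refine Finset.sum_congr rfl fun i hi => Finset.sum_congr rfl fun j hj => ?_
    rw [map_zsmul Q]
    congr 1
    rw [comm_pow_apply P Q hc, pow_apply_succ Q]
    have ei : n - i = n + 1 - (i + 1) := by omega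
    have ej : n - j + 1 = n + 1 - j := by
      have := Finset.mem_range.mp hj; omega
    have ea : a - 1 - i = a - (i + 1) := by omega
    rw [ei, ej, ea]
  have p4 : Tsum P Q X Y n (a - 1) (b - 1)
      = ∑ i ∈ Finset.range (n + 1), ∑ j ∈ Finset.range (n + 1),
          (((-1 : ℤ) ^ (i + j)) * (n.choose i : ℤ) * (n.choose j : ℤ)) • v (i + 1) (j + 1) := by
    simp only [Tsum]
    refine Finset.sum_congr rfl fun i hi => Finset.sum_congr rfl fun j hj => ?_
    congr 1
    have ei : n - i = n + 1 - (i + 1) := by omega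
    have ej : n - j = n + 1 - (j + 1) := by omega
    have ea : a - 1 - i = a - (i + 1) := by omega
    have eb : b - 1 - j = b - (j + 1) := by omega
    rw [ei, ej, ea, eb]
  rw [p1, p2, p3, p4, hR]
  simp only [smul_sub, Finset.sum_sub_distrib]
  abel

end AuxLemmas

/-- expansion of `τ⁽ᵐ⁾_A` on generalized eigenvector fields belonging to
Jordan chains (with `X₀ = Y₀ = 0`), for `m ≥ 2`. -/
theorem tau_on_jordan_chains (C : VectorFieldCalculus R L)
    (A : L →ₗ[R] L) (μ ν : R) (X Y : ℕ → L) (α β : ℕ)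
    (hX0 : X 0 = 0) (hY0 : Y 0 = 0)
    (hXchain : ∀ a : ℕ, 1 ≤ a → a ≤ α → A (X a) = μ • X a + X (a - 1))
    (hYchain : ∀ b : ℕ, 1 ≤ b → b ≤ β → A (Y b) = ν • Y b + Y (b - 1))
    (m : ℕ) (hm : 2 ≤ m) :
    tau A m (X α) (Y β)
      = ∑ i ∈ Finset.range (m + 1), ∑ j ∈ Finset.range (m + 1),
          (((-1 : ℤ) ^ (i + j)) * (m.choose i) * (m.choose j)) •
            (((A - μ • LinearMap.id : L →ₗ[R] L)) ^ (m - i))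
              ((((A - ν • LinearMap.id : L →ₗ[R] L)) ^ (m - j)) ⁅X (α - i), Y (β - j)⁆) := by
  set P : L →ₗ[R] L := A - μ • LinearMap.id with hP
  set Q : L →ₗ[R] L := A - ν • LinearMap.id with hQ
  have hAX : ∀ a, a ≤ α → A (X a) = μ • X a + X (a - 1) := by
    intro a ha
    rcases Nat.eq_zero_or_pos a with rfl | h
    · simp [hX0]
    · exact hXchain a h ha
  have hAY : ∀ b, b ≤ β → A (Y b) = ν • Y b + Y (b - 1) := by
    intro b hb
    rcases Nat.eq_zero_or_pos b with rfl | h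
    · simp [hY0]
    · exact hYchain b h hb
  have hPap : ∀ v, P v = A v - μ • v := by
    intro v; simp [hP, LinearMap.sub_apply]
  have hQap : ∀ v, Q v = A v - ν • v := by
    intro v; simp [hQ, LinearMap.sub_apply]
  have hPX : ∀ a, a ≤ α → P (X a) = X (a - 1) := by
    intro a ha; rw [hPap, hAX a ha]; abel
  have hQY : ∀ b, b ≤ β → Q (Y b) = Y (b - 1) := by
    intro b hb; rw [hQap, hAY b hb]; abel
  have hQX : ∀ a, a ≤ α → Q (X a) = (μ - ν) • X a + X (a - 1) := by
    intro a ha; rw [hQap, hAX a ha]; module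
  have hPY : ∀ b, b ≤ β → P (Y b) = (ν - μ) • Y b + Y (b - 1) := by
    intro b hb; rw [hPap, hAY b hb]; module
  have hc : ∀ v, P (Q v) = Q (P v) := by
    intro v
    rw [hPap, hQap, hQap, hPap]
    simp only [map_sub, map_smul]
    module
  set D : ℕ → ℕ → L := fun a b =>
      (μ * C.anchor (Y b) μ - C.anchor (ν • Y b) μ - C.anchor (Y (b - 1)) μ) • X a
      + (C.anchor (Y b) μ) • X (a - 1)
      + ((μ - ν) * C.anchor (X a) ν + C.anchor (X (a - 1)) ν) • Y b
      - (C.anchor (X a) ν) • Y (b - 1) with hD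
  have hN : ∀ a b, a ≤ α → b ≤ β → tau A 1 (X a) (Y b) = Tsum P Q X Y 1 a b + D a b := by
    intro a b ha hb
    have hT1 : Tsum P Q X Y 1 a b
        = P (Q ⁅X a, Y b⁆) - P ⁅X a, Y (b - 1)⁆ - Q ⁅X (a - 1), Y b⁆
          + ⁅X (a - 1), Y (b - 1)⁆ := by
      simp only [Tsum, Finset.sum_range_succ, Finset.sum_range_zero]
      norm_num
      abel
    rw [hT1, hD]
    have e : tau A 1 (X a) (Y b)
        = A (A ⁅X a, Y b⁆) + ⁅A (X a), A (Y b)⁆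
          - A (⁅X a, A (Y b)⁆ + ⁅A (X a), Y b⁆) := rfl
    rw [e, hAX a ha, hAY b hb]
    simp only [lie_add, add_lie]
    simp only [brkL C]
    simp only [brkR C]
    simp only [map_add, map_sub, map_smul]
    rw [hAX a ha, hAY b hb]
    simp only [hPap, hQap, map_add, map_sub, map_smul]
    module
  have hDc : ∀ a b, a ≤ α → b ≤ β →
      P (Q (D a b)) - P (D a (b - 1)) - Q (D (a - 1) b) + D (a - 1) (b - 1) = 0 := by
    intro a b ha hb
    have ha' : a - 1 ≤ α := le_trans (Nat.sub_le a 1) ha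
    have ha'' : a - 1 - 1 ≤ α := le_trans (Nat.sub_le _ 1) ha'
    have hb' : b - 1 ≤ β := le_trans (Nat.sub_le b 1) hb
    have hb'' : b - 1 - 1 ≤ β := le_trans (Nat.sub_le _ 1) hb'
    simp only [hD]
    simp only [map_add, map_sub, map_smul]
    rw [hQX a ha, hQX (a - 1) ha', hQX (a - 1 - 1) ha'', hQY b hb, hQY (b - 1) hb']
    simp only [map_add, map_sub, map_smul]
    rw [hPX a ha, hPX (a - 1) ha', hPX (a - 1 - 1) ha'', hPY (b - 1) hb', hPY (b - 1 - 1) hb'']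
    module
  have hrec : ∀ n, 1 ≤ n → ∀ a b, a ≤ α → b ≤ β →
      tau A (n + 1) (X a) (Y b)
        = P (Q (tau A n (X a) (Y b))) - P (tau A n (X a) (Y (b - 1)))
          - Q (tau A n (X (a - 1)) (Y b)) + tau A n (X (a - 1)) (Y (b - 1)) := by
    intro n hn a b ha hb
    rw [tau_succ, hAX a ha, hAY b hb]
    simp only [tau_add_left, tau_add_right]
    simp only [tau_smul_left C A n hn, tau_smul_right C A n hn]
    simp only [hPap, hQap, map_add, map_sub, map_smul]
    module
  have key : ∀ n, 2 ≤ n → ∀ a b, a ≤ α → b ≤ β → tau A n (X a) (Y b) = Tsum P Q X Y n a b := by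
    intro n hn
    induction n, hn using Nat.le_induction with
    | base =>
        intro a b ha hb
        have ha' : a - 1 ≤ α := le_trans (Nat.sub_le a 1) ha
        have hb' : b - 1 ≤ β := le_trans (Nat.sub_le b 1) hb
        have h2 := hrec 1 le_rfl a b ha hb
        rw [h2, hN a b ha hb, hN a (b - 1) ha hb', hN (a - 1) b ha' hb,
          hN (a - 1) (b - 1) ha' hb']
        calc P (Q (Tsum P Q X Y 1 a b + D a b)) - P (Tsum P Q X Y 1 a (b - 1) + D a (b - 1))
              - Q (Tsum P Q X Y 1 (a - 1) b + D (a - 1) b)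
              + (Tsum P Q X Y 1 (a - 1) (b - 1) + D (a - 1) (b - 1))
            = (P (Q (Tsum P Q X Y 1 a b)) - P (Tsum P Q X Y 1 a (b - 1))
                - Q (Tsum P Q X Y 1 (a - 1) b) + Tsum P Q X Y 1 (a - 1) (b - 1))
              + (P (Q (D a b)) - P (D a (b - 1)) - Q (D (a - 1) b) + D (a - 1) (b - 1)) := by
              simp only [map_add]; abel
          _ = Tsum P Q X Y 2 a b := by
              rw [Tstep P Q hc X Y 1 a b, hDc a b ha hb, add_zero]
    | succ n hn ih =>
        intro a b ha hb
        have ha' : a - 1 ≤ α := le_trans (Nat.sub_le a 1) ha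
        have hb' : b - 1 ≤ β := le_trans (Nat.sub_le b 1) hb
        rw [hrec n (by omega) a b ha hb, ih a b ha hb, ih a (b - 1) ha hb',
          ih (a - 1) b ha' hb, ih (a - 1) (b - 1) ha' hb', Tstep P Q hc X Y n a b]
  exact key m hm α β le_rfl le_rfl
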